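/- Correctness of the reduction from punctual reachability games to periodically declining temporal reachability games: let G = (V, E) be a static game with V partitioned into V₁, V₂, let v ∈ V₁ be the target vertex and T ∈ ℕ the target time, and set K = T+1. Define the temporal game G' on V' = V ∪ {w, ⊤, ⊥} (fresh vertices) with V'₁ = V₁ ∪ {w, ⊤, ⊥} and V'₂ = V₂, and K-periodic edge availabilities, described via r = x mod K: for (s,t) ∈ E with s ∈ V₁, s →_x t iff r < T; for every s ∈ V₁ ∖ {v}, s →_x ⊥ at all times; for (s,t) ∈ E with s ∈ V₂, s →_x t at all times; for every s ∈ V₂, s →_x ⊥ iff r = T; v →_x w at all times; w →_x ⊥ at all times; w →_x ⊤ iff r = 0; ⊤ and ⊥ have no outgoing edges. Then the edge relation of G' is K-periodic, the game restricted to one period is declining, and for every u ∈ V: Player 1 wins the temporal reachability game on G' with target set {⊤} from position (u, 0) if and only if Player 1 wins the punctual reachability game on G with target vertex v and target time T from u. -/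

import Mathlib

/-!
A temporal graph: vertex set `V`, time-indexed edge relation `E t u v` (edge from `u` to `v`
available at time `t`).  `P1 v` means vertex `v` is controlled by Player 1.  A play from
position `(u,k)` is a maximal sequence of positions `(v₀,k), (v₁,k+1), …` following available
edges, where the owner of the current vertex chooses the next one; the play halts at a
position whose owner has no available edge.

`P1WinsReach E P1 F u k` : Player 1 wins the reachability game with target set `F` from
position `(u, k)`, i.e. she has a strategy (assigning to each position `(v,t)` with `v ∈ V₁`
that has at least one available edge an available successor) such that every maximal play
from `(u,k)` consistent with it — infinite, or halting at a position with no available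
edge — visits `F`.
-/
def P1WinsReach {V : Type*} (E : ℕ → V → V → Prop) (P1 : V → Prop) (F : Set V)
    (u : V) (k : ℕ) : Prop :=
  ∃ σ : V → ℕ → V,
    (∀ (v : V) (t : ℕ), k ≤ t → P1 v → (∃ w, E t v w) → E t v (σ v t)) ∧
    (∀ ρ : ℕ → V, ρ 0 = u →
      (∀ i, E (k + i) (ρ i) (ρ (i + 1))) →
      (∀ i, P1 (ρ i) → ρ (i + 1) = σ (ρ i) (k + i)) →
      ∃ i, ρ i ∈ F) ∧
    (∀ (ρ : ℕ → V) (n : ℕ), ρ 0 = u →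
      (∀ i < n, E (k + i) (ρ i) (ρ (i + 1))) →
      (∀ i < n, P1 (ρ i) → ρ (i + 1) = σ (ρ i) (k + i)) →
      (∀ w, ¬ E (k + n) (ρ n) w) →
      ∃ i ≤ n, ρ i ∈ F)

/-!
`PunctualWins Es P1 v T u` : in the punctual reachability game on the static game with
edge relation `Es` (Player-1 vertices given by `P1`), target vertex `v` and target time
`T`, Player 1 wins from `u`: she has a strategy (assigning to each position `(s,t)` with
`s ∈ V₁` that has an outgoing edge one of its successors) such that every maximal play
from `u` at time `0` consistent with it — infinite, or halting at a vertex with no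
outgoing edge — visits `v` at time exactly `T`.
-/
def PunctualWins {V : Type*} (Es : V → V → Prop) (P1 : V → Prop) (v : V) (T : ℕ)
    (u : V) : Prop :=
  ∃ σ : V → ℕ → V,
    (∀ (s : V) (t : ℕ), P1 s → (∃ w, Es s w) → Es s (σ s t)) ∧
    (∀ ρ : ℕ → V, ρ 0 = u →
      (∀ i, Es (ρ i) (ρ (i + 1))) →
      (∀ i, P1 (ρ i) → ρ (i + 1) = σ (ρ i) i) →
      ρ T = v) ∧
    (∀ (ρ : ℕ → V) (n : ℕ), ρ 0 = u →
      (∀ i < n, Es (ρ i) (ρ (i + 1))) →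
      (∀ i < n, P1 (ρ i) → ρ (i + 1) = σ (ρ i) i) →
      (∀ w, ¬ Es (ρ n) w) →
      T ≤ n ∧ ρ T = v)

/-!
Reduction from a punctual reachability game on a static game `G = (V, Es)` with target
vertex `v ∈ V₁` and target time `T` to a reachability game on a periodically declining
temporal graph `G'` with period `K = T + 1`.  The vertex set of `G'` is `V ⊕ Fin 3`, with
the three fresh vertices `w = Sum.inr 0`, `⊤ = Sum.inr 1`, `⊥ = Sum.inr 2`.

`K`-periodic edge availabilities (`perE`), described via `r = x % K`:
for `(s,t) ∈ E` with `s ∈ V₁`, `s →_x t` iff `r < T`;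
for every `s ∈ V₁ \ {v}`, `s →_x ⊥` at all times;
for `(s,t) ∈ E` with `s ∈ V₂`, `s →_x t` at all times;
for every `s ∈ V₂`, `s →_x ⊥` iff `r = T`;
`v →_x w` at all times;  `w →_x ⊥` at all times;  `w →_x ⊤` iff `r = 0`;
`⊤` and `⊥` have no outgoing edges.

Ownership (`perP1`): `V'₁ = V₁ ∪ {w, ⊤, ⊥}` and `V'₂ = V₂`.

"The game restricted to one period is declining" is formalized as: the game on the finite
temporal graph obtained from `G'` by freezing the edge relation from the end of the first
period onwards (edge relation `fun x => perE … (min x T)`) is declining.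
-/
def perE {V : Type*} (Es : V → V → Prop) (P1 : V → Prop) (v : V) (T : ℕ) :
    ℕ → (V ⊕ Fin 3) → (V ⊕ Fin 3) → Prop := fun x a b =>
  match a, b with
  | Sum.inl s, Sum.inl t => Es s t ∧ ((P1 s ∧ x % (T + 1) < T) ∨ ¬ P1 s)
  | Sum.inl s, Sum.inr j =>
      (s = v ∧ j = (0 : Fin 3)) ∨
      (j = (2 : Fin 3) ∧ ((P1 s ∧ s ≠ v) ∨ (¬ P1 s ∧ x % (T + 1) = T)))
  | Sum.inr j, Sum.inr j' =>
      j = (0 : Fin 3) ∧ (j' = (2 : Fin 3) ∨ (j' = (1 : Fin 3) ∧ x % (T + 1) = 0))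
  | Sum.inr _, Sum.inl _ => False

def perP1 {V : Type*} (P1 : V → Prop) : (V ⊕ Fin 3) → Prop := fun a =>
  match a with
  | Sum.inl s => P1 s
  | Sum.inr _ => True

/-!
In `G'` the target `⊤` can only be entered from `w` at a time `≡ 0 (mod T + 1)`, and `w` only
from `v`, so Player 1 wins exactly by standing on `v` at a time `≡ T`. Before time `T` the
moves of `G'` inside `V` are those of `G`, while stepping to `w` or `⊥` loses (from `w` only
`⊥` is then available); at time `T` Player 1 loses her edges inside `V` and Player 2 gains
the edge to `⊥`, so the play is decided there, and it is won iff it stands on `v`. Hence a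
punctual strategy lifts to `G'` (play it until time `T`, then go `v → w → ⊤`), and a winning
strategy of `G'` keeps every consistent play inside `V` until time `T`, so that it restricts
to a punctual strategy.
-/

section TemporalGame

variable {W : Type*} (E : ℕ → W → W → Prop) (P : W → Prop) (σ : W → ℕ → W)
  (k : ℕ)

-- `P1WinsReach E P F u k` unfolds to `∃ σ, IsReachWinning E P σ k F u`.
def IsReachWinning (F : Set W) (u : W) : Prop :=
  (∀ (a : W) (t : ℕ), k ≤ t → P a → (∃ b, E t a b) → E t a (σ a t)) ∧
    (∀ ρ : ℕ → W, ρ 0 = u →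
      (∀ i, E (k + i) (ρ i) (ρ (i + 1))) →
      (∀ i, P (ρ i) → ρ (i + 1) = σ (ρ i) (k + i)) →
      ∃ i, ρ i ∈ F) ∧
    (∀ (ρ : ℕ → W) (n : ℕ), ρ 0 = u →
      (∀ i < n, E (k + i) (ρ i) (ρ (i + 1))) →
      (∀ i < n, P (ρ i) → ρ (i + 1) = σ (ρ i) (k + i)) →
      (∀ b, ¬ E (k + n) (ρ n) b) →
      ∃ i ≤ n, ρ i ∈ F)

inductive SafeHistory (F : Set W) (u : W) : ℕ → W → Prop
  | start : u ∉ F → SafeHistory F u 0 u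
  | step {n : ℕ} {a b : W} : SafeHistory F u n a → E (k + n) a b →
      (P a → b = σ a (k + n)) → b ∉ F → SafeHistory F u (n + 1) b

variable {E P σ k} {F : Set W} {u : W}

theorem SafeHistory.not_mem {n : ℕ} {a : W} (h : SafeHistory E P σ k F u n a) : a ∉ F := by
  cases h <;> assumption

theorem SafeHistory.exists_path {n : ℕ} {a : W} (h : SafeHistory E P σ k F u n a) :
    ∃ ρ : ℕ → W, ρ 0 = u ∧ ρ n = a ∧ (∀ i < n, E (k + i) (ρ i) (ρ (i + 1))) ∧
      (∀ i < n, P (ρ i) → ρ (i + 1) = σ (ρ i) (k + i)) ∧ ∀ i ≤ n, ρ i ∉ F := by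
  induction h with
  | start hu => exact ⟨fun _ => u, rfl, rfl, by simp, by simp, fun _ _ => hu⟩
  | @step n a b _ hab hσ hb ih =>
    obtain ⟨ρ, h0, hn, hρE, hρσ, hρF⟩ := ih
    refine ⟨fun i => if i ≤ n then ρ i else b, by simp [h0], by simp, fun i hi => ?_,
      fun i hi => ?_, fun i hi => ?_⟩
    · rcases Nat.lt_succ_iff_lt_or_eq.mp hi with hi | rfl
      · simpa [hi.le, Nat.succ_le_of_lt hi] using hρE i hi
      · simpa [hn] using hab
    · rcases Nat.lt_succ_iff_lt_or_eq.mp hi with hi | rfl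
      · simpa [hi.le, Nat.succ_le_of_lt hi] using hρσ i hi
      · simpa [hn] using hσ
    · rcases Nat.le_succ_iff.mp hi with hi | rfl
      · simpa [hi] using hρF i hi
      · simpa using hb

theorem safeHistory_of_path {ρ : ℕ → W} {n : ℕ} (h0 : ρ 0 = u)
    (hE : ∀ i < n, E (k + i) (ρ i) (ρ (i + 1)))
    (hσ : ∀ i < n, P (ρ i) → ρ (i + 1) = σ (ρ i) (k + i)) (hF : ∀ i ≤ n, ρ i ∉ F) :
    ∀ m ≤ n, SafeHistory E P σ k F u m (ρ m)
  | 0, _ => h0 ▸ .start (h0 ▸ hF 0 (Nat.zero_le n))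
  | m + 1, hm =>
    .step (safeHistory_of_path h0 hE hσ hF m (by omega)) (hE m hm) (hσ m hm) (hF _ hm)

theorem SafeHistory.exists_edge (hσ : IsReachWinning E P σ k F u) {n : ℕ} {a : W}
    (h : SafeHistory E P σ k F u n a) : ∃ b, E (k + n) a b := by
  by_contra! hstuck
  obtain ⟨ρ, h0, rfl, hE, hc, hF⟩ := h.exists_path
  obtain ⟨i, hi, hiF⟩ := hσ.2.2 ρ n h0 hE hc hstuck
  exact hF i hi hiF

theorem isReachWinning_of_invariant (I : ℕ → W → Prop) (N : ℕ)
    (hσ : ∀ a t, k ≤ t → P a → (∃ b, E t a b) → E t a (σ a t)) (h0 : I 0 u)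
    (hstep : ∀ i < N, ∀ a, I i a → a ∉ F → (∃ b, E (k + i) a b) ∧
      ∀ b, E (k + i) a b → (P a → b = σ a (k + i)) → I (i + 1) b)
    (hN : ∀ a, I N a → a ∈ F) :
    IsReachWinning E P σ k F u := by
  -- An infinite play is handled through its prefix of length `N`.
  have hplay : ∀ (ρ : ℕ → W) (n : ℕ), ρ 0 = u →
      (∀ i < n, E (k + i) (ρ i) (ρ (i + 1))) →
      (∀ i < n, P (ρ i) → ρ (i + 1) = σ (ρ i) (k + i)) →
      (n < N → ∀ b, ¬ E (k + n) (ρ n) b) → ∃ i ≤ n, ρ i ∈ F := by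
    intro ρ n hρ0 hE hc hstuck
    by_contra! hF
    have hI : ∀ i ≤ min n N, I i (ρ i) := by
      intro i hi
      induction i with
      | zero => exact hρ0 ▸ h0
      | succ i ih =>
        exact (hstep i (by omega) _ (ih (by omega)) (hF i (by omega))).2 _
          (hE i (by omega)) (hc i (by omega))
    rcases le_or_gt N n with hNn | hnN
    · exact hF N hNn (hN _ (hI N (by omega)))
    · obtain ⟨b, hb⟩ := (hstep n hnN _ (hI n (by omega)) (hF n le_rfl)).1
      exact hstuck hnN b hb
  refine ⟨hσ, fun ρ hρ0 hE hc => ?_,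
    fun ρ n hρ0 hE hc hstuck => hplay ρ n hρ0 hE hc fun _ => hstuck⟩
  obtain ⟨i, -, hi⟩ :=
    hplay ρ N hρ0 (fun i _ => hE i) (fun i _ => hc i) (absurd · (lt_irrefl N))
  exact ⟨i, hi⟩

def extendPath (next : W → ℕ → W) (k : ℕ) (ρ : ℕ → W) (n : ℕ) : ℕ → W
  | 0 => ρ 0
  | i + 1 => if i < n then ρ (i + 1) else next (extendPath next k ρ n i) (k + i)

theorem extendPath_of_le (next : W → ℕ → W) (ρ : ℕ → W) {n : ℕ} :
    ∀ {i}, i ≤ n → extendPath next k ρ n i = ρ i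
  | 0, _ => rfl
  | i + 1, hi => if_pos (by omega)

theorem extendPath_succ_of_le (next : W → ℕ → W) (ρ : ℕ → W) {n i : ℕ} (hi : n ≤ i) :
    extendPath next k ρ n (i + 1) = next (extendPath next k ρ n i) (k + i) :=
  if_neg (by omega)

theorem exists_maximal_extension
    (hσ : ∀ a t, k ≤ t → P a → (∃ b, E t a b) → E t a (σ a t))
    (ρ : ℕ → W) (n : ℕ) (hE : ∀ i < n, E (k + i) (ρ i) (ρ (i + 1)))
    (hc : ∀ i < n, P (ρ i) → ρ (i + 1) = σ (ρ i) (k + i)) :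
    ∃ ρ' : ℕ → W, (∀ i ≤ n, ρ' i = ρ i) ∧
      ((∀ i, E (k + i) (ρ' i) (ρ' (i + 1))) ∧
          (∀ i, P (ρ' i) → ρ' (i + 1) = σ (ρ' i) (k + i)) ∨
        ∃ m, n ≤ m ∧ (∀ i < m, E (k + i) (ρ' i) (ρ' (i + 1))) ∧
          (∀ i < m, P (ρ' i) → ρ' (i + 1) = σ (ρ' i) (k + i)) ∧
          ∀ b, ¬ E (k + m) (ρ' m) b) := by
  classical
  let next : W → ℕ → W := fun a t =>
    if P a then σ a t else if h : ∃ b, E t a b then h.choose else a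
  set ρ' := extendPath next k ρ n
  have hagree : ∀ i ≤ n, ρ' i = ρ i := fun i => extendPath_of_le next ρ
  have hmove : ∀ i, (∃ b, E (k + i) (ρ' i) b) →
      E (k + i) (ρ' i) (ρ' (i + 1)) ∧ (P (ρ' i) → ρ' (i + 1) = σ (ρ' i) (k + i)) := by
    intro i hex
    rcases lt_or_ge i n with hi | hi
    · rw [hagree i hi.le, hagree (i + 1) hi]
      exact ⟨hE i hi, hc i hi⟩
    · rw [show ρ' (i + 1) = next (ρ' i) (k + i) from extendPath_succ_of_le next ρ hi]
      by_cases hP : P (ρ' i)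
      · rw [show next (ρ' i) (k + i) = σ (ρ' i) (k + i) from if_pos hP]
        exact ⟨hσ _ _ (Nat.le_add_right k i) hP hex, fun _ => rfl⟩
      · rw [show next (ρ' i) (k + i) = hex.choose by simp only [next, if_neg hP, dif_pos hex]]
        exact ⟨hex.choose_spec, fun h => absurd h hP⟩
  refine ⟨ρ', hagree, ?_⟩
  by_cases hinf : ∀ i, ∃ b, E (k + i) (ρ' i) b
  · exact Or.inl ⟨fun i => (hmove i (hinf i)).1, fun i => (hmove i (hinf i)).2⟩
  · push Not at hinf
    have hmin : ∀ i < Nat.find hinf, ∃ b, E (k + i) (ρ' i) b := by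
      intro i hi
      simpa using Nat.find_min hinf hi
    refine Or.inr ⟨Nat.find hinf, ?_, fun i hi => (hmove i (hmin i hi)).1,
      fun i hi => (hmove i (hmin i hi)).2, Nat.find_spec hinf⟩
    by_contra! hlt
    obtain ⟨b, hb⟩ : ∃ b, E (k + Nat.find hinf) (ρ' (Nat.find hinf)) b :=
      ⟨ρ (Nat.find hinf + 1), by rw [hagree _ hlt.le]; exact hE _ hlt⟩
    exact Nat.find_spec hinf b hb

end TemporalGame

section StaticGame

variable {V : Type*} {Es : V → V → Prop} {P1 : V → Prop} {v : V} {T : ℕ}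
  {σ : V → ℕ → V} {u : V}

abbrev StaticHistory (Es : V → V → Prop) (P1 : V → Prop) (σ : V → ℕ → V) (u : V) :
    ℕ → V → Prop :=
  SafeHistory (fun _ => Es) P1 σ 0 ∅ u

-- `PunctualWins Es P1 v T u` unfolds to `∃ σ, IsPunctualWinning Es P1 v T u σ`.
def IsPunctualWinning (Es : V → V → Prop) (P1 : V → Prop) (v : V) (T : ℕ) (u : V)
    (σ : V → ℕ → V) : Prop :=
  (∀ (s : V) (t : ℕ), P1 s → (∃ w, Es s w) → Es s (σ s t)) ∧
    (∀ ρ : ℕ → V, ρ 0 = u →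
      (∀ i, Es (ρ i) (ρ (i + 1))) →
      (∀ i, P1 (ρ i) → ρ (i + 1) = σ (ρ i) i) →
      ρ T = v) ∧
    (∀ (ρ : ℕ → V) (n : ℕ), ρ 0 = u →
      (∀ i < n, Es (ρ i) (ρ (i + 1))) →
      (∀ i < n, P1 (ρ i) → ρ (i + 1) = σ (ρ i) i) →
      (∀ w, ¬ Es (ρ n) w) →
      T ≤ n ∧ ρ T = v)

theorem IsPunctualWinning.exists_succ (hσ : IsPunctualWinning Es P1 v T u σ) {n : ℕ} {s : V}
    (h : StaticHistory Es P1 σ u n s) (hn : n < T) : ∃ t, Es s t := by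
  by_contra! hstuck
  obtain ⟨ρ, h0, rfl, hE, hc, -⟩ := h.exists_path
  have := (hσ.2.2 ρ n h0 hE (by simpa using hc) hstuck).1
  omega

theorem IsPunctualWinning.eq_target (hσ : IsPunctualWinning Es P1 v T u σ) {s : V}
    (h : StaticHistory Es P1 σ u T s) : s = v := by
  obtain ⟨ρ, h0, rfl, hE, hc, -⟩ := h.exists_path
  obtain ⟨ρ', hagree, hplay⟩ :=
    exists_maximal_extension (fun a t _ => hσ.1 a t) ρ T hE hc
  rw [← hagree T le_rfl]
  have h0' : ρ' 0 = u := (hagree 0 (Nat.zero_le T)).trans h0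
  rcases hplay with ⟨hE', hc'⟩ | ⟨m, -, hE', hc', hstuck⟩
  · exact hσ.2.1 ρ' h0' hE' (by simpa using hc')
  · exact (hσ.2.2 ρ' m h0' hE' (by simpa using hc') hstuck).2

end StaticGame

section Reduction

variable {V : Type*} {Es : V → V → Prop} {P1 : V → Prop} {v : V} {T : ℕ}
  {σ : V → ℕ → V} {σ' : V ⊕ Fin 3 → ℕ → V ⊕ Fin 3} {u : V}

theorem perE_periodic (a b : V ⊕ Fin 3) (x : ℕ) :
    perE Es P1 v T x a b ↔ perE Es P1 v T (x + (T + 1)) a b := by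
  rcases a with s | j <;> rcases b with t | j' <;> simp [perE, Nat.add_mod_right]

theorem perE_min_declining (a b : V ⊕ Fin 3) (x : ℕ) :
    (perP1 P1 a → (perE Es P1 v T (min (x + 1) T) a b → perE Es P1 v T (min x T) a b)) ∧
    (¬ perP1 P1 a → (perE Es P1 v T (min x T) a b → perE Es P1 v T (min (x + 1) T) a b)) := by
  have hmod : ∀ y, min y T % (T + 1) = min y T := fun y => Nat.mod_eq_of_lt (by omega)
  rcases a with s | j <;> rcases b with t | j' <;> simp only [perE, perP1, hmod] <;> grind

theorem exists_perE_of_P1 {s : V} (hs : P1 s) (x : ℕ) :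
    ∃ b, perE Es P1 v T x (Sum.inl s) b := by
  by_cases hsv : s = v
  · exact ⟨Sum.inr 0, by simp [perE, hsv]⟩
  · exact ⟨Sum.inr 2, by simp [perE, hs, hsv]⟩

theorem perE_inl_inl_of_mod_lt {s t : V} {x : ℕ} (hst : Es s t) (hx : x % (T + 1) < T) :
    perE Es P1 v T x (Sum.inl s) (Sum.inl t) :=
  ⟨hst, (em (P1 s)).imp (⟨·, hx⟩) id⟩

open Classical in
noncomputable def perStrategy (Es : V → V → Prop) (v : V) (T : ℕ) (σ : V → ℕ → V) :
    V ⊕ Fin 3 → ℕ → V ⊕ Fin 3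
  | Sum.inl s, t =>
      if t % (T + 1) < T ∧ ∃ w, Es s w then Sum.inl (σ s t)
      else if s = v then Sum.inr 0 else Sum.inr 2
  | Sum.inr _, t => if t % (T + 1) = 0 then Sum.inr 1 else Sum.inr 2

theorem perStrategy_valid (hσ : ∀ s t, P1 s → (∃ w, Es s w) → Es s (σ s t))
    (a : V ⊕ Fin 3) (t : ℕ) (ha : perP1 P1 a) (hex : ∃ b, perE Es P1 v T t a b) :
    perE Es P1 v T t a (perStrategy Es v T σ a t) := by
  rcases a with s | j
  · simp only [perStrategy]
    split_ifs with hmove hsv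
    · exact perE_inl_inl_of_mod_lt (hσ s t ha hmove.2) hmove.1
    · simp [perE, hsv]
    · simp [perE, hsv, show P1 s from ha]
  · obtain ⟨b, hb⟩ := hex
    obtain rfl : j = 0 := by rcases b with _ | _ <;> simp_all [perE]
    simp only [perStrategy]
    split_ifs with h <;> simp [perE, h]

theorem IsPunctualWinning.perStrategy_step (hv : P1 v) (hσ : IsPunctualWinning Es P1 v T u σ)
    {i : ℕ} {s : V} (h : StaticHistory Es P1 σ u i s) (hi : i < T)
    {b : V ⊕ Fin 3} (hb : perE Es P1 v T i (Sum.inl s) b)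
    (hcons : P1 s → b = perStrategy Es v T σ (Sum.inl s) i) :
    ∃ t, b = Sum.inl t ∧ StaticHistory Es P1 σ u (i + 1) t := by
  have hmod : i % (T + 1) < T := (Nat.mod_le i (T + 1)).trans_lt hi
  have hsucc := hσ.exists_succ h hi
  rcases b with t | j
  · refine ⟨t, rfl, h.step hb.1 (fun hs => ?_) (Set.notMem_empty t)⟩
    simpa [perStrategy, hmod, hsucc, zero_add] using hcons hs
  · by_cases hs : P1 s
    · exact absurd (hcons hs) (by simp [perStrategy, hmod, hsucc])
    · simp only [perE] at hb
      rcases hb with ⟨rfl, -⟩ | ⟨-, ⟨hs', -⟩ | ⟨-, hT⟩⟩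
      · exact absurd hv hs
      · exact absurd hs' hs
      · omega

theorem IsPunctualWinning.isReachWinning_perStrategy (hv : P1 v)
    (hσ : IsPunctualWinning Es P1 v T u σ) :
    IsReachWinning (perE Es P1 v T) (perP1 P1) (perStrategy Es v T σ) 0 {Sum.inr 1}
      (Sum.inl u) := by
  have hT : T % (T + 1) = T := Nat.mod_eq_of_lt (Nat.lt_succ_self T)
  refine isReachWinning_of_invariant
    (fun i a => (i ≤ T ∧ ∃ s, a = Sum.inl s ∧ StaticHistory Es P1 σ u i s) ∨
      (i = T + 1 ∧ a = Sum.inr 0) ∨ (i = T + 2 ∧ a = Sum.inr 1)) (T + 2)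
    (fun a t _ => perStrategy_valid hσ.1 a t)
    (Or.inl ⟨Nat.zero_le T, u, rfl, .start (Set.notMem_empty u)⟩) ?_ ?_
  · rintro i hi a (⟨hiT, s, rfl, hs⟩ | ⟨rfl, rfl⟩ | ⟨rfl, rfl⟩) ha
    · rw [zero_add]
      rcases hiT.lt_or_eq with hiT | rfl
      · obtain ⟨t, ht⟩ := hσ.exists_succ hs hiT
        have hmod : i % (T + 1) < T := (Nat.mod_le i (T + 1)).trans_lt hiT
        refine ⟨⟨Sum.inl t, perE_inl_inl_of_mod_lt ht hmod⟩, fun b hb hcons => ?_⟩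
        obtain ⟨t', rfl, ht'⟩ := hσ.perStrategy_step hv hs hiT hb hcons
        exact Or.inl ⟨hiT, t', rfl, ht'⟩
      · obtain rfl := hσ.eq_target hs
        refine ⟨⟨Sum.inr 0, by simp [perE]⟩, fun b _ hcons => Or.inr (Or.inl ⟨rfl, ?_⟩)⟩
        simpa [perStrategy, hT] using hcons hv
    · refine ⟨⟨Sum.inr 2, by simp [perE]⟩, fun b _ hcons => Or.inr (Or.inr ⟨rfl, ?_⟩)⟩
      simpa [perStrategy] using hcons trivial
    · omega
  · rintro a (⟨h, -⟩ | ⟨h, -⟩ | ⟨-, rfl⟩)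
    · omega
    · omega
    · rfl

abbrev PerHistory (Es : V → V → Prop) (P1 : V → Prop) (v : V) (T : ℕ)
    (σ' : V ⊕ Fin 3 → ℕ → V ⊕ Fin 3) (u : V) : ℕ → V ⊕ Fin 3 → Prop :=
  SafeHistory (perE Es P1 v T) (perP1 P1) σ' 0 {Sum.inr 1} (Sum.inl u)

theorem PerHistory.not_bot
    (hσ' : IsReachWinning (perE Es P1 v T) (perP1 P1) σ' 0 {Sum.inr 1} (Sum.inl u)) {n : ℕ}
    (h : PerHistory Es P1 v T σ' u n (Sum.inr 2)) : False := by
  obtain ⟨b, hb⟩ := h.exists_edge hσ'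
  rcases b with _ | _ <;> simp [perE] at hb

theorem PerHistory.inr
    (hσ' : IsReachWinning (perE Es P1 v T) (perP1 P1) σ' 0 {Sum.inr 1} (Sum.inl u)) {n : ℕ}
    {j : Fin 3} (h : PerHistory Es P1 v T σ' u n (Sum.inr j)) : j = 0 ∧ n % (T + 1) = 0 := by
  fin_cases j
  · refine ⟨rfl, by_contra fun hn => ?_⟩
    have hmove := hσ'.1 (Sum.inr 0) n (Nat.zero_le n) trivial ⟨Sum.inr 2, by simp [perE]⟩
    have hbot : σ' (Sum.inr 0) n = Sum.inr 2 := by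
      rcases hσ : σ' (Sum.inr 0) n with _ | j <;> rw [hσ] at hmove <;> simp [perE, hn] at hmove
      rw [hmove]
    exact PerHistory.not_bot hσ' (h.step (by simp [perE]) (fun _ => by simpa using hbot.symm)
      (by simp))
  · exact absurd h.not_mem (by simp)
  · exact (h.not_bot hσ').elim

theorem PerHistory.exists_move
    (hσ' : IsReachWinning (perE Es P1 v T) (perP1 P1) σ' 0 {Sum.inr 1} (Sum.inl u)) {n : ℕ}
    {s : V} (h : PerHistory Es P1 v T σ' u n (Sum.inl s)) (hn : n < T) (hs : P1 s) :
    ∃ t, σ' (Sum.inl s) n = Sum.inl t ∧ perE Es P1 v T n (Sum.inl s) (Sum.inl t) := by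
  have hmove := hσ'.1 (Sum.inl s) n (Nat.zero_le n) hs (exists_perE_of_P1 hs n)
  rcases hσ : σ' (Sum.inl s) n with t | j
  · exact ⟨t, rfl, hσ ▸ hmove⟩
  · rw [hσ] at hmove
    have hj : Sum.inr j ∉ ({Sum.inr 1} : Set (V ⊕ Fin 3)) := by
      rintro hj
      obtain rfl := Sum.inr_injective hj
      simp [perE] at hmove
    have := (PerHistory.inr hσ'
      (h.step (by simpa using hmove) (fun _ => by simpa using hσ.symm) hj)).2
    rw [Nat.mod_eq_of_lt (by omega)] at this
    omega

theorem PerHistory.exists_succ (hv : P1 v)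
    (hσ' : IsReachWinning (perE Es P1 v T) (perP1 P1) σ' 0 {Sum.inr 1} (Sum.inl u)) {n : ℕ}
    {s : V} (h : PerHistory Es P1 v T σ' u n (Sum.inl s)) (hn : n < T) : ∃ t, Es s t := by
  by_cases hs : P1 s
  · obtain ⟨t, -, ht⟩ := h.exists_move hσ' hn hs
    exact ⟨t, ht.1⟩
  obtain ⟨b, hb⟩ := h.exists_edge hσ'
  rcases b with t | j
  · exact ⟨t, hb.1⟩
  · simp only [perE, zero_add] at hb
    rcases hb with ⟨rfl, -⟩ | ⟨-, ⟨hs', -⟩ | ⟨-, hT⟩⟩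
    · exact absurd hv hs
    · exact absurd hs' hs
    · rw [Nat.mod_eq_of_lt (by omega)] at hT
      omega

theorem PerHistory.eq_target
    (hσ' : IsReachWinning (perE Es P1 v T) (perP1 P1) σ' 0 {Sum.inr 1} (Sum.inl u)) {s : V}
    (h : PerHistory Es P1 v T σ' u T (Sum.inl s)) : s = v := by
  by_contra hsv
  have hT : T % (T + 1) = T := Nat.mod_eq_of_lt (Nat.lt_succ_self T)
  have hbot : perE Es P1 v T T (Sum.inl s) (Sum.inr 2) := by
    by_cases hs : P1 s <;> simp [perE, hs, hsv, hT]
  refine PerHistory.not_bot hσ' (h.step (by simpa using hbot) (fun hs => ?_) (by simp))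
  have hs : P1 s := hs
  have hmove := hσ'.1 (Sum.inl s) T (Nat.zero_le T) hs ⟨_, hbot⟩
  rcases hσ : σ' (Sum.inl s) T with t | j <;> rw [hσ] at hmove <;>
    simp [perE, hs, hsv, hT] at hmove
  rw [zero_add, hσ, hmove]

open Classical in
noncomputable def punctualStrategy (Es : V → V → Prop)
    (σ' : V ⊕ Fin 3 → ℕ → V ⊕ Fin 3) : V → ℕ → V := fun s t =>
  (σ' (Sum.inl s) t).elim id fun _ => if h : ∃ w, Es s w then h.choose else s

theorem punctualStrategy_valid
    (hσ' : ∀ a t, 0 ≤ t → perP1 P1 a → (∃ b, perE Es P1 v T t a b) →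
      perE Es P1 v T t a (σ' a t))
    (s : V) (t : ℕ) (hs : P1 s) (hsucc : ∃ w, Es s w) : Es s (punctualStrategy Es σ' s t) := by
  have hmove := hσ' (Sum.inl s) t (Nat.zero_le t) hs (exists_perE_of_P1 hs t)
  rcases hσ : σ' (Sum.inl s) t with w | j <;> simp only [punctualStrategy, hσ, Sum.elim_inl,
    Sum.elim_inr, id, dif_pos hsucc]
  · exact (hσ ▸ hmove).1
  · exact hsucc.choose_spec

theorem StaticHistory.toPerHistory
    (hσ' : IsReachWinning (perE Es P1 v T) (perP1 P1) σ' 0 {Sum.inr 1} (Sum.inl u)) {n : ℕ}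
    {s : V} (h : StaticHistory Es P1 (punctualStrategy Es σ') u n s) (hn : n ≤ T) :
    PerHistory Es P1 v T σ' u n (Sum.inl s) := by
  induction h with
  | start => exact .start (by simp)
  | @step n a b _ hab hc _ ih =>
    have ih := ih (by omega)
    by_cases ha : P1 a
    · obtain ⟨t, hσt, hat⟩ := ih.exists_move hσ' (by omega) ha
      obtain rfl : b = t := by simpa [punctualStrategy, hσt] using hc ha
      exact ih.step (by simpa using hat) (fun _ => by simpa using hσt.symm) (by simp)
    · exact ih.step ⟨hab, Or.inr ha⟩ (fun h => absurd h ha) (by simp)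

theorem IsReachWinning.isPunctualWinning_punctualStrategy (hv : P1 v)
    (hσ' : IsReachWinning (perE Es P1 v T) (perP1 P1) σ' 0 {Sum.inr 1} (Sum.inl u)) :
    IsPunctualWinning Es P1 v T u (punctualStrategy Es σ') := by
  have hhist : ∀ (ρ : ℕ → V) (n : ℕ), ρ 0 = u → (∀ i < n, Es (ρ i) (ρ (i + 1))) →
      (∀ i < n, P1 (ρ i) → ρ (i + 1) = punctualStrategy Es σ' (ρ i) i) →
      ∀ m ≤ n, m ≤ T → PerHistory Es P1 v T σ' u m (Sum.inl (ρ m)) :=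
    fun ρ n h0 hE hc m hm hmT => StaticHistory.toPerHistory hσ'
      (safeHistory_of_path (E := fun _ => Es) (F := ∅) h0 hE (by simpa using hc) (by simp) m hm)
      hmT
  refine ⟨punctualStrategy_valid hσ'.1, fun ρ h0 hE hc => ?_, fun ρ n h0 hE hc hstuck => ?_⟩
  · exact (hhist ρ T h0 (fun i _ => hE i) (fun i _ => hc i) T le_rfl le_rfl).eq_target hσ'
  · have hTn : T ≤ n := by
      by_contra! hn
      obtain ⟨t, ht⟩ := (hhist ρ n h0 hE hc n le_rfl hn.le).exists_succ hv hσ' hn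
      exact hstuck t ht
    exact ⟨hTn, (hhist ρ n h0 hE hc T hTn le_rfl).eq_target hσ'⟩

end Reduction

/-- Correctness of the reduction from punctual reachability games to periodically declining
temporal reachability games: the edge relation of `G'` is `K`-periodic with `K = T+1`, the
game restricted to one period (frozen from the end of the first period onwards) is
declining, and for every `u ∈ V`, Player 1 wins the temporal reachability game on `G'`
with target set `{⊤}` from `(u, 0)` iff she wins the punctual reachability game on `G`
with target vertex `v` and target time `T` from `u`. -/
theorem punctual_to_periodically_declining_reduction
    {V : Type*} (Es : V → V → Prop) (P1 : V → Prop) (v : V)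
    (hv : P1 v) (T : ℕ) :
    (∀ (a b : V ⊕ Fin 3) (x : ℕ),
        perE Es P1 v T x a b ↔ perE Es P1 v T (x + (T + 1)) a b) ∧
    (∀ (a b : V ⊕ Fin 3) (x : ℕ),
        (perP1 P1 a → (perE Es P1 v T (min (x + 1) T) a b → perE Es P1 v T (min x T) a b)) ∧
        (¬ perP1 P1 a → (perE Es P1 v T (min x T) a b → perE Es P1 v T (min (x + 1) T) a b))) ∧
    (∀ u : V,
      P1WinsReach (perE Es P1 v T) (perP1 P1) {Sum.inr (1 : Fin 3)} (Sum.inl u) 0 ↔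
      PunctualWins Es P1 v T u) :=
  ⟨perE_periodic, perE_min_declining, fun _ =>
    ⟨fun ⟨_, hσ'⟩ => ⟨_, IsReachWinning.isPunctualWinning_punctualStrategy hv hσ'⟩,
     fun ⟨_, hσ⟩ => ⟨_, IsPunctualWinning.isReachWinning_perStrategy hv hσ⟩⟩⟩
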